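/- arXiv:2507.03104 — 2 statements merged into one kernel-verified Lean document; each statement's English description precedes it below -/
import Mathlib

section
/- Let G be a simple mixed graph on n ≥ 1 vertices that has at least one edge or at least one arc. Then ν₁(G) ≥ max{Δ₁(G), Δ₂(G)} + 1, where Δ₁(G) = max_v (d v + d⁺ v) and Δ₂(G) = max_v (d v + d⁻ v). -/
set_option linter.unusedSectionVars false

open Matrix Finset Polynomial

variable {V : Type*} [Fintype V] [DecidableEq V]

/-- Undirected adjacency matrix of the mixed graph with edge-multiplicity function `E`:
`(u,v)`-entry `E u v` for `u ≠ v`, and `(v,v)`-entry `2 * E v v`. -/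
def Au (E : V → V → ℕ) : Matrix V V ℝ :=
  Matrix.of fun u v => if u = v then ((2 * E v v : ℕ) : ℝ) else ((E u v : ℕ) : ℝ)

/-- Arc matrix of the mixed graph with arc-multiplicity function `A`. -/
def Bm (A : V → V → ℕ) : Matrix V V ℝ := Matrix.of fun u v => ((A u v : ℕ) : ℝ)

/-- Undirected degree `d v`. -/
def dU (E : V → V → ℕ) (v : V) : ℕ :=
  (∑ u ∈ Finset.univ.filter (fun u => u ≠ v), E v u) + 2 * E v v

/-- Out-degree `d⁺ v`. -/
def dOut (A : V → V → ℕ) (v : V) : ℕ := ∑ u, A v u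

/-- In-degree `d⁻ v`. -/
def dIn (A : V → V → ℕ) (v : V) : ℕ := ∑ u, A u v

/-- Integrated adjacency matrix `𝓘(G) = [[Aᵤ, B], [Bᵀ, Aᵤ]]`. -/
def intAdj (E A : V → V → ℕ) : Matrix (V ⊕ V) (V ⊕ V) ℝ :=
  Matrix.fromBlocks (Au E) (Bm A) (Bm A)ᵀ (Au E)

/-- Integrated degree matrix `𝓘ᴰ(G)`. -/
def intDeg (E A : V → V → ℕ) : Matrix (V ⊕ V) (V ⊕ V) ℝ :=
  Matrix.diagonal (Sum.elim (fun v => ((dU E v + dOut A v : ℕ) : ℝ))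
    (fun v => ((dU E v + dIn A v : ℕ) : ℝ)))

/-- Integrated Laplacian matrix `𝓘ᴸ(G) = 𝓘ᴰ(G) - 𝓘(G)`. -/
def intLap (E A : V → V → ℕ) : Matrix (V ⊕ V) (V ⊕ V) ℝ := intDeg E A - intAdj E A

/-- Integrated signless Laplacian matrix `𝓘Q(G) = 𝓘ᴰ(G) + 𝓘(G)`. -/
def intQ (E A : V → V → ℕ) : Matrix (V ⊕ V) (V ⊕ V) ℝ := intDeg E A + intAdj E A

/-- A mixed graph is simple: multiplicities at most 1, no loops, no directed loops. -/
def IsSimple (E A : V → V → ℕ) : Prop :=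
  (∀ u v, E u v ≤ 1) ∧ (∀ u v, A u v ≤ 1) ∧ (∀ v, E v v = 0) ∧ (∀ v, A v v = 0)

/-- Number of edges (excluding loops): `e(G) = (1/2)·Σ_{u ≠ v} E u v`. -/
noncomputable def numEdges (E : V → V → ℕ) : ℝ :=
  (∑ u, ∑ v ∈ Finset.univ.filter (fun v => v ≠ u), (E u v : ℝ)) / 2

/-- Number of loops: `l(G) = Σ_v E v v`. -/
noncomputable def numLoops (E : V → V → ℕ) : ℝ := ∑ v, (E v v : ℝ)

/-- Number of arcs (including directed loops): `a(G) = Σ_{u,v} A u v`. -/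
noncomputable def numArcs (A : V → V → ℕ) : ℝ := ∑ u, ∑ v, (A u v : ℝ)

lemma intAdj_isHermitian (E A : V → V → ℕ) (hE : ∀ u v, E u v = E v u) :
    (intAdj E A).IsHermitian := by
  have hAu : (Au E)ᵀ = Au E := by
    ext u v
    by_cases h : u = v
    · subst h; rfl
    · simp [Au, Matrix.transpose_apply, h, Ne.symm h, hE u v]
  show (intAdj E A)ᴴ = intAdj E A
  rw [Matrix.conjTranspose_eq_transpose_of_trivial]
  unfold intAdj
  rw [Matrix.fromBlocks_transpose, hAu, Matrix.transpose_transpose]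

lemma intLap_isHermitian (E A : V → V → ℕ) (hE : ∀ u v, E u v = E v u) :
    (intLap E A).IsHermitian :=
  (Matrix.isHermitian_diagonal _).sub (intAdj_isHermitian E A hE)

lemma intQ_isHermitian (E A : V → V → ℕ) (hE : ∀ u v, E u v = E v u) :
    (intQ E A).IsHermitian :=
  (Matrix.isHermitian_diagonal _).add (intAdj_isHermitian E A hE)

/-- The non-increasing rearrangement of a finite tuple of reals. -/
noncomputable def sortDesc {N : ℕ} (f : Fin N → ℝ) : Fin N → ℝ :=
  fun i => (f ∘ Tuple.sort f) i.rev

/-- The eigenvalues of the integrated Laplacian matrix `𝓘ᴸ(G)`, in non-increasing order: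
`nuT E A hE i` is `ν_{i+1}(G)` (0-indexed). -/
noncomputable def nuT {n : ℕ} (E A : Fin n → Fin n → ℕ) (hE : ∀ u v, E u v = E v u) :
    Fin (n + n) → ℝ :=
  sortDesc (fun i => (intLap_isHermitian E A hE).eigenvalues (finSumFinEquiv.symm i))

/-- The eigenvalues of the integrated signless Laplacian matrix `𝓘Q(G)`, in non-increasing
order: `xiT E A hE i` is `ξ_{i+1}(G)` (0-indexed). -/
noncomputable def xiT {n : ℕ} (E A : Fin n → Fin n → ℕ) (hE : ∀ u v, E u v = E v u) :
    Fin (n + n) → ℝ :=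
  sortDesc (fun i => (intQ_isHermitian E A hE).eigenvalues (finSumFinEquiv.symm i))

/-- The eigenvalues of the integrated adjacency matrix `𝓘(G)`, in non-increasing order:
`lamT E A hE i` is `λ_{i+1}(G)` (0-indexed). -/
noncomputable def lamT {n : ℕ} (E A : Fin n → Fin n → ℕ) (hE : ∀ u v, E u v = E v u) :
    Fin (n + n) → ℝ :=
  sortDesc (fun i => (intAdj_isHermitian E A hE).eigenvalues (finSumFinEquiv.symm i))

/-!
The integrated adjacency matrix of a simple mixed graph is the 0/1 adjacency matrix of a simple
graph `H` on two copies of the vertex set, in which the copies of `v` have degrees `d v + d⁺ v`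
and `d v + d⁻ v`; thus `𝓘ᴸ(G)` is the Laplacian of `H`. If `w` has maximum degree `Δ ≥ 1` in
`H`, the test vector equal to `Δ` at `w` and to `-1` at the neighbours of `w` has Rayleigh
quotient at least `Δ + 1` for the Laplacian, and the Rayleigh quotient is bounded by `ν₁`.
-/

open scoped MatrixOrder in
theorem Matrix.IsHermitian.dotProduct_mulVec_le {n : Type*} [Fintype n] [DecidableEq n]
    {M : Matrix n n ℝ} (hM : M.IsHermitian) {c : ℝ} (hc : ∀ i, hM.eigenvalues i ≤ c)
    (x : n → ℝ) : x ⬝ᵥ (M *ᵥ x) ≤ c * (x ⬝ᵥ x) := by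
  have hle : M ≤ algebraMap ℝ _ c := by
    refine le_algebraMap_of_spectrum_le (ha := hM.isSelfAdjoint) fun r hr => ?_
    obtain ⟨i, rfl⟩ := hM.spectrum_real_eq_range_eigenvalues ▸ hr
    exact hc i
  have := (Matrix.le_iff.mp hle).dotProduct_mulVec_nonneg x
  rw [Algebra.algebraMap_eq_smul_one, sub_mulVec, smul_mulVec, one_mulVec, dotProduct_sub,
    dotProduct_smul, star_trivial, smul_eq_mul] at this
  linarith

theorem Matrix.IsAdjMatrix.degree_toGraph {α W : Type*} [Fintype W] [NonAssocSemiring α]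
    [Nontrivial α] [DecidableEq α] {M : Matrix W W α} (h : M.IsAdjMatrix) (i : W) :
    (h.toGraph.degree i : α) = ∑ j, M i j := by
  simp_rw [SimpleGraph.degree_eq_sum_if_adj, ← SimpleGraph.adjMatrix_apply,
    h.adjMatrix_toGraph_eq]

theorem le_sortDesc_zero {N : ℕ} (hN : 0 < N) (f : Fin N → ℝ) (j : Fin N) :
    f j ≤ sortDesc f ⟨0, hN⟩ := by
  have h1 : f j = (f ∘ Tuple.sort f) ((Tuple.sort f)⁻¹ j) := by simp
  rw [sortDesc, h1]
  apply Tuple.monotone_sort f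
  rw [Fin.le_def]
  simp [Fin.rev]
  omega

namespace SimpleGraph

variable {W : Type*} [Fintype W] [DecidableEq W] (G : SimpleGraph W) [DecidableRel G.Adj]

theorem degree_add_one_le_of_dotProduct_lapMatrix_le {w : W} (hw : 0 < G.degree w) {c : ℝ}
    (hc : ∀ x : W → ℝ, x ⬝ᵥ (G.lapMatrix ℝ *ᵥ x) ≤ c * (x ⬝ᵥ x)) :
    (G.degree w : ℝ) + 1 ≤ c := by
  set d : ℝ := (G.degree w : ℝ)
  let nbr : W → ℝ := fun u => if G.Adj w u then 1 else 0
  have hnbr : ∑ u, nbr u = d := (G.degree_eq_sum_if_adj w).symm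
  let x : W → ℝ := fun u => (if u = w then d else 0) - nbr u
  have hxx : x ⬝ᵥ x = d * (d + 1) := by
    have hsq : ∀ u, x u * x u = (if u = w then d ^ 2 else 0) + nbr u := by
      intro u
      by_cases hu : u = w
      · subst hu; simp [x, nbr, sq]
      · by_cases ha : G.Adj w u <;> simp [x, nbr, hu, ha]
    simp only [dotProduct, hsq, sum_add_distrib, sum_ite_eq', mem_univ, if_true, hnbr]
    ring
  have hxLx : d * (d + 1) ^ 2 ≤ x ⬝ᵥ (G.lapMatrix ℝ *ᵥ x) := by
    -- keep only the edges at `w`; each contributes `(d + 1) ^ 2` in both orientations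
    have hterm : ∀ i j, (if i = w then nbr j else 0) * (d + 1) ^ 2 +
        (if j = w then nbr i else 0) * (d + 1) ^ 2 ≤
        if G.Adj i j then (x i - x j) ^ 2 else 0 := by
      intro i j
      by_cases hij : G.Adj i j
      · rw [if_pos hij]
        by_cases hi : i = w
        · subst hi
          simp [x, nbr, hij, hij.ne']
        by_cases hj : j = w
        · subst hj
          simp [x, nbr, hi, hij.symm]
          nlinarith
        simp only [hi, hj, if_false, zero_mul, add_zero]
        positivity
      · rw [if_neg hij]
        by_cases hi : i = w
        · subst hi; simp [nbr, hij]
        by_cases hj : j = w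
        · subst hj; simp [nbr, hi, G.adj_comm j i, hij]
        simp [hi, hj]
    rw [← toLinearMap₂'_apply', lapMatrix_toLinearMap₂']
    calc d * (d + 1) ^ 2
        = (∑ i, ∑ j, ((if i = w then nbr j else 0) * (d + 1) ^ 2 +
            (if j = w then nbr i else 0) * (d + 1) ^ 2)) / 2 := by
          simp only [sum_add_distrib, ← sum_mul, sum_ite_eq', sum_ite_irrel, sum_const_zero,
            mem_univ, if_true, hnbr]
          ring
      _ ≤ _ := by gcongr with i _ j _; exact hterm i j
  have hd : 0 < d * (d + 1) := by positivity
  nlinarith [hc x]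

end SimpleGraph

section IntegratedGraph

variable (E A : V → V → ℕ)

def intDegree : V ⊕ V → ℕ := Sum.elim (fun v => dU E v + dOut A v) (fun v => dU E v + dIn A v)

theorem sup_intDegree :
    univ.sup (intDegree E A) =
      max (univ.sup fun v => dU E v + dOut A v) (univ.sup fun v => dU E v + dIn A v) := by
  rw [← univ_disjSum_univ, sup_disjSum]
  rfl

theorem sum_Au_apply (v : V) : ∑ u, Au E v u = dU E v := by
  rw [dU, ← sum_erase_add univ _ (mem_univ v), filter_ne']
  push_cast
  congr 1
  · refine sum_congr rfl fun u hu => ?_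
    simp [Au, (ne_of_mem_erase hu).symm]
  · simp [Au]

theorem sum_intAdj_apply (z : V ⊕ V) : ∑ z', intAdj E A z z' = intDegree E A z := by
  rcases z with v | v <;>
  simp [Fintype.sum_sum_type, intAdj, intDegree, sum_Au_apply, Bm, dOut, dIn, add_comm]

theorem intDeg_eq_diagonal : intDeg E A = diagonal fun z => (intDegree E A z : ℝ) := by
  rw [intDeg, intDegree]
  congr 1
  ext (v | v) <;> rfl

theorem exists_one_le_intDegree (hedge : (∃ u v, u ≠ v ∧ 1 ≤ E u v) ∨ (∃ u v, 1 ≤ A u v)) :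
    ∃ z, 1 ≤ intDegree E A z := by
  rcases hedge with ⟨u, v, huv, huv1⟩ | ⟨u, v, huv1⟩
  · refine ⟨Sum.inl u, huv1.trans ?_⟩
    have hv : v ∈ univ.filter (· ≠ u) := by simp [huv.symm]
    exact (single_le_sum (fun _ _ => Nat.zero_le _) hv).trans
      ((Nat.le_add_right _ _).trans (Nat.le_add_right _ _))
  · exact ⟨Sum.inl u, huv1.trans <| (single_le_sum (fun _ _ => Nat.zero_le _) (mem_univ v)).trans
      (Nat.le_add_left _ _)⟩

variable {E A}

theorem isAdjMatrix_intAdj (hE : ∀ u v, E u v = E v u) (hS : IsSimple E A) :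
    (intAdj E A).IsAdjMatrix := by
  obtain ⟨hE1, hA1, hE0, -⟩ := hS
  have h01 : ∀ k : ℕ, k ≤ 1 → (k : ℝ) = 0 ∨ (k : ℝ) = 1 := by
    intro k hk; interval_cases k <;> simp
  have hAu : ∀ u v, Au E u v = 0 ∨ Au E u v = 1 := by
    intro u v
    by_cases h : u = v
    · simp [Au, h, hE0]
    · simpa [Au, h] using h01 _ (hE1 u v)
  refine ⟨?_, isHermitian_iff_isSymm.mp (intAdj_isHermitian E A hE), ?_⟩
  · rintro (u | u) (v | v)
    exacts [hAu u v, h01 _ (hA1 u v), h01 _ (hA1 v u), hAu u v]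
  · rintro (v | v) <;> simp [intAdj, Au, hE0]

theorem degree_toGraph_intAdj (hE : ∀ u v, E u v = E v u) (hS : IsSimple E A) (z : V ⊕ V) :
    (isAdjMatrix_intAdj hE hS).toGraph.degree z = intDegree E A z := by
  exact_mod_cast (IsAdjMatrix.degree_toGraph _ z).trans (sum_intAdj_apply E A z)

theorem intLap_eq_lapMatrix (hE : ∀ u v, E u v = E v u) (hS : IsSimple E A) :
    intLap E A = (isAdjMatrix_intAdj hE hS).toGraph.lapMatrix ℝ := by
  rw [intLap, SimpleGraph.lapMatrix, SimpleGraph.degMatrix, IsAdjMatrix.adjMatrix_toGraph_eq,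
    intDeg_eq_diagonal]
  simp_rw [degree_toGraph_intAdj hE hS]

end IntegratedGraph

/-- if a simple mixed graph `G` on `n ≥ 1` vertices has at least one edge or
at least one arc, then `ν₁(G) ≥ max{Δ₁(G), Δ₂(G)} + 1` where `Δ₁(G) = max_v (d v + d⁺ v)`
and `Δ₂(G) = max_v (d v + d⁻ v)`. -/
theorem stmt13 (n : ℕ) (hn : 0 < n) (E A : Fin n → Fin n → ℕ)
    (hE : ∀ u v, E u v = E v u) (hS : IsSimple E A)
    (hedge : (∃ u v, u ≠ v ∧ 1 ≤ E u v) ∨ (∃ u v, 1 ≤ A u v)) :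
    ((max (Finset.univ.sup (fun v => dU E v + dOut A v))
        (Finset.univ.sup (fun v => dU E v + dIn A v)) : ℕ) : ℝ) + 1 ≤
      nuT E A hE ⟨0, by omega⟩ := by
  set G := (isAdjMatrix_intAdj hE hS).toGraph
  have : Nonempty (Fin n) := ⟨⟨0, hn⟩⟩
  obtain ⟨w, -, hw⟩ := exists_mem_eq_sup univ univ_nonempty (intDegree E A)
  obtain ⟨z, hz⟩ := exists_one_le_intDegree E A hedge
  have hpos : 0 < G.degree w := by
    rw [degree_toGraph_intAdj hE hS, ← hw]
    exact hz.trans (le_sup (mem_univ z))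
  have hν : ∀ j, (intLap_isHermitian E A hE).eigenvalues j ≤ nuT E A hE ⟨0, by omega⟩ := by
    intro j
    simpa [nuT] using le_sortDesc_zero (by omega) (fun i =>
      (intLap_isHermitian E A hE).eigenvalues (finSumFinEquiv.symm i)) (finSumFinEquiv j)
  have hquad := (intLap_isHermitian E A hE).dotProduct_mulVec_le hν
  rw [intLap_eq_lapMatrix hE hS] at hquad
  have := G.degree_add_one_le_of_dotProduct_lapMatrix_le hpos hquad
  rwa [degree_toGraph_intAdj hE hS, ← hw, sup_intDegree] at this
end

section
/- Let G be a mixed graph on n vertices and let r, s be natural numbers. Then G is (r,s)-regular (i.e., d v = r and d⁺ v = d⁻ v = s for every vertex v) if and only if 𝓘Q(G) · 𝟏 = 2(r+s) · 𝟏 and 𝓘Q(G) · w = 2r · w, where 𝟏 is the all-ones vector indexed by V ⊕ V and w is the vector indexed by V ⊕ V equal to 1 on the first copy of V and −1 on the second copy of V. -/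
set_option linter.unusedSectionVars false

open Matrix Finset Polynomial

variable {V : Type*} [Fintype V] [DecidableEq V]

lemma rowSum_Au (E : V → V → ℕ) (v : V) : ∑ u, Au E v u = (dU E v : ℝ) := by
  rw [← Finset.add_sum_erase _ _ (Finset.mem_univ v)]
  have h1 : Au E v v = ((2 * E v v : ℕ) : ℝ) := by simp [Au]
  have h2 : ∀ u ∈ Finset.univ.erase v, Au E v u = ((E v u : ℕ) : ℝ) := by
    intro u hu
    have : v ≠ u := (Finset.ne_of_mem_erase hu).symm
    simp [Au, this]
  rw [h1, Finset.sum_congr rfl h2, dU]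
  rw [← Finset.filter_ne' Finset.univ v]
  push_cast
  ring

lemma rowSum_Bm (A : V → V → ℕ) (v : V) : ∑ u, Bm A v u = (dOut A v : ℝ) := by
  simp [Bm, dOut]

lemma colSum_Bm (A : V → V → ℕ) (v : V) : ∑ u, Bm A u v = (dIn A v : ℝ) := by
  simp [Bm, dIn]

lemma intQ_mulVec_inl (E A : V → V → ℕ) (x : V ⊕ V → ℝ) (v : V) :
    (intQ E A *ᵥ x) (Sum.inl v) =
      ((dU E v + dOut A v : ℕ) : ℝ) * x (Sum.inl v)
        + ∑ u, Au E v u * x (Sum.inl u) + ∑ u, Bm A v u * x (Sum.inr u) := by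
  simp [intQ, intDeg, intAdj, Matrix.mulVec, dotProduct, Fintype.sum_sum_type,
    Matrix.add_apply, Matrix.diagonal_apply, Finset.sum_add_distrib, add_mul,
    Finset.sum_ite_eq, Finset.sum_ite_eq', ite_mul, zero_mul]
  ring

lemma intQ_mulVec_inr (E A : V → V → ℕ) (x : V ⊕ V → ℝ) (v : V) :
    (intQ E A *ᵥ x) (Sum.inr v) =
      ((dU E v + dIn A v : ℕ) : ℝ) * x (Sum.inr v)
        + ∑ u, Bm A u v * x (Sum.inl u) + ∑ u, Au E v u * x (Sum.inr u) := by
  simp [intQ, intDeg, intAdj, Matrix.mulVec, dotProduct, Fintype.sum_sum_type,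
    Matrix.add_apply, Matrix.diagonal_apply, Finset.sum_add_distrib, add_mul,
    Finset.sum_ite_eq, Finset.sum_ite_eq', ite_mul, zero_mul]
  ring

/-- `G` is `(r,s)`-regular iff `𝓘Q(G)·𝟏 = 2(r+s)·𝟏` and `𝓘Q(G)·w = 2r·w`,
where `w` is `1` on the first copy of `V` and `−1` on the second copy. -/
theorem stmt16 (n : ℕ) (E A : Fin n → Fin n → ℕ) (hE : ∀ u v, E u v = E v u) (r s : ℕ) :
    (∀ v, dU E v = r ∧ dOut A v = s ∧ dIn A v = s) ↔
      (intQ E A *ᵥ (fun _ => (1 : ℝ)) = (2 * ((r : ℝ) + s)) • (fun _ => (1 : ℝ))) ∧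
      (intQ E A *ᵥ (Sum.elim (fun _ => (1 : ℝ)) (fun _ => (-1 : ℝ))) =
        (2 * (r : ℝ)) • (Sum.elim (fun _ => (1 : ℝ)) (fun _ => (-1 : ℝ)))) := by
  constructor
  · intro h
    constructor
    · funext i
      cases i with
      | inl v =>
        rw [intQ_mulVec_inl]
        simp only [mul_one, Pi.smul_apply, smul_eq_mul]
        rw [rowSum_Au, rowSum_Bm] <;> try rfl
        obtain ⟨h1, h2, h3⟩ := h v
        rw [h1, h2]; push_cast; ring
      | inr v =>
        rw [intQ_mulVec_inr]
        simp only [mul_one, Pi.smul_apply, smul_eq_mul]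
        rw [rowSum_Au, colSum_Bm]
        obtain ⟨h1, h2, h3⟩ := h v
        rw [h1, h3]; push_cast; ring
    · funext i
      cases i with
      | inl v =>
        rw [intQ_mulVec_inl]
        simp only [Sum.elim_inl, Sum.elim_inr, mul_one, mul_neg_one, Pi.smul_apply,
          smul_eq_mul, ← Finset.sum_neg_distrib]
        rw [rowSum_Au]
        have : ∑ u, -(Bm A v u) = -(dOut A v : ℝ) := by rw [Finset.sum_neg_distrib, rowSum_Bm]
        rw [this]
        obtain ⟨h1, h2, h3⟩ := h v
        rw [h1, h2]; push_cast; ring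
      | inr v =>
        rw [intQ_mulVec_inr]
        simp only [Sum.elim_inl, Sum.elim_inr, mul_one, mul_neg_one, Pi.smul_apply,
          smul_eq_mul]
        have : ∑ u, -(Au E v u) = -(dU E v : ℝ) := by rw [Finset.sum_neg_distrib, rowSum_Au]
        rw [colSum_Bm, this]
        obtain ⟨h1, h2, h3⟩ := h v
        rw [h1, h3]; push_cast; ring
  · rintro ⟨h1, h2⟩ v
    have e1 := congrFun h1 (Sum.inl v)
    have e2 := congrFun h1 (Sum.inr v)
    have e3 := congrFun h2 (Sum.inl v)
    rw [intQ_mulVec_inl] at e1 e3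
    rw [intQ_mulVec_inr] at e2
    simp only [Sum.elim_inl, Sum.elim_inr, mul_one, mul_neg_one, Pi.smul_apply,
      smul_eq_mul] at e1 e2 e3
    rw [rowSum_Au, rowSum_Bm] at e1
    rw [rowSum_Au, colSum_Bm] at e2
    rw [rowSum_Au] at e3
    rw [Finset.sum_neg_distrib, rowSum_Bm] at e3
    push_cast at e1 e2 e3
    refine ⟨?_, ?_, ?_⟩
    · exact_mod_cast (show ((dU E v : ℕ) : ℝ) = r by linarith)
    · exact_mod_cast (show ((dOut A v : ℕ) : ℝ) = s by linarith)
    · exact_mod_cast (show ((dIn A v : ℕ) : ℝ) = s by linarith)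
end
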